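/- arXiv:2102.05779 — 2 statements merged into one kernel-verified Lean document; each statement's English description precedes it below -/
import Mathlib

section
/- Fix an integer p ≥ 5 and set λ = 2cos(π/p), so that λ² - 1 > 0. Define q(z) = 1/(z - √(λ²-1)) - √(λ²-1)/(√(λ²-1)·z + 1). Then q satisfies the rational period function relations of weight 2 on the Hecke group G_p: for every z ∈ ℂ with Im z ≠ 0, q(z) + z^{-2}·q(-1/z) = 0 and Σ_{j=0}^{p-1} (q |_{2} U^j)(z) = 0. (Its poles √(λ²-1) and -1/√(λ²-1) form a single irreducible system of poles without Hecke-symmetry.) -/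
/-!
For `v = (e, f)` put `g_v(z) = e / (e z + f)`, the logarithmic derivative of `z ↦ e z + f`.
Differentiating `log (e (Mz) + f) = log ((vM) · (z, 1)) - log (cz + d)` shows that for
`det M = 1` the weight-2 slash acts by `g_v ∣ M = g_{vM} - g_{(c,d)}`, so on a difference
`q = g_v - g_w` it acts simply by `q ∣ M = g_{vM} - g_{wM}`; moreover `g_v` only depends on
the line through `v`. Here `q = g_{(1,-A)} - g_{(A,1)}` with `A² = λ² - 1`.
`T` maps `(1,-A)` to `-(A,1)` and `(A,1)` to `(1,-A)`, giving `q ∣ T = -q`.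
`U²` maps `(1,-A)` to `(A - λ)(A,1)`, so `q ∣ Uʲ = G j - G (j + 2)` with
`G j = g_{(1,-A) Uʲ}`; the sum telescopes because `Uᵖ = -1` makes `G` `p`-periodic.
That `Uᵖ = -1` comes from `U² = λU - 1`, which gives `sin x • Uⁿ⁺¹ = sin((n+1)x) U - sin(nx)`
for `λ = 2 cos x`, and `x = π/p`.
-/

open Matrix Real

/-- The weight-`2k` slash operator: for a real 2×2 matrix `M = ((a,b),(c,d))`,
`(f ∣_{2k} M)(z) = (cz+d)^{-2k} · f((az+b)/(cz+d))`. -/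
noncomputable def slash (k : ℕ) (M : Matrix (Fin 2) (Fin 2) ℝ)
    (f : ℂ → ℂ) (z : ℂ) : ℂ :=
  ((M 1 0 : ℂ) * z + (M 1 1 : ℂ)) ^ (-(2 * (k : ℤ))) *
    f (((M 0 0 : ℂ) * z + (M 0 1 : ℂ)) / ((M 1 0 : ℂ) * z + (M 1 1 : ℂ)))

noncomputable def linearLogDeriv (v : Fin 2 → ℝ) (z : ℂ) : ℂ :=
  v 0 / (v 0 * z + v 1)

lemma linearForm_ne_zero {v : Fin 2 → ℝ} (hv : v ≠ 0) {z : ℂ} (hz : z.im ≠ 0) :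
    (v 0 : ℂ) * z + v 1 ≠ 0 := by
  intro h
  have him : v 0 * z.im = 0 := by simpa using congrArg Complex.im h
  have h0 : v 0 = 0 := (mul_eq_zero.mp him).resolve_right hz
  have h1 : v 1 = 0 := by simpa [h0] using h
  exact hv (by ext i; fin_cases i <;> assumption)

lemma linearLogDeriv_smul {r : ℝ} (hr : r ≠ 0) (v : Fin 2 → ℝ) :
    linearLogDeriv (r • v) = linearLogDeriv v := by
  ext z
  have hr' : (r : ℂ) ≠ 0 := by exact_mod_cast hr
  simp only [linearLogDeriv, Pi.smul_apply, smul_eq_mul, Complex.ofReal_mul]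
  rw [show (r : ℂ) * v 0 * z + r * v 1 = r * (v 0 * z + v 1) by ring,
    mul_div_mul_left _ _ hr']

lemma slash_sub (k : ℕ) (M : Matrix (Fin 2) (Fin 2) ℝ) (f g : ℂ → ℂ) :
    slash k M (f - g) = slash k M f - slash k M g := by
  ext z
  simp only [slash, Pi.sub_apply, mul_sub]

lemma slash_two_linearLogDeriv {M : Matrix (Fin 2) (Fin 2) ℝ} (hM : M.det = 1)
    {v : Fin 2 → ℝ} (hv : v ≠ 0) {z : ℂ} (hz : z.im ≠ 0) :
    slash 1 M (linearLogDeriv v) z = linearLogDeriv (v ᵥ* M) z - linearLogDeriv (M 1) z := by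
  have hM0 : M.det ≠ 0 := by rw [hM]; exact one_ne_zero
  have hrow : M 1 ≠ 0 := fun h => hM0 (det_eq_zero_of_row_eq_zero 1 (by simp [h]))
  have hcd := linearForm_ne_zero hrow hz
  have hL := linearForm_ne_zero (fun h => hM0 (exists_vecMul_eq_zero_iff.mp ⟨v, hv, h⟩)) hz
  have hdet : (M 0 0 : ℂ) * M 1 1 - M 0 1 * M 1 0 = 1 := by
    have h := det_fin_two M; rw [hM] at h; exact_mod_cast h.symm
  simp only [vecMul, dotProduct, Fin.sum_univ_two] at hL
  simp only [slash, linearLogDeriv, vecMul, dotProduct, Fin.sum_univ_two]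
  push_cast at hL ⊢
  have hMz : (v 0 : ℂ) * ((M 0 0 * z + M 0 1) / (M 1 0 * z + M 1 1)) + v 1
      = ((v 0 * M 0 0 + v 1 * M 1 0) * z + (v 0 * M 0 1 + v 1 * M 1 1)) /
        (M 1 0 * z + M 1 1) := by
    rw [eq_div_iff hcd, add_mul, mul_assoc, div_mul_cancel₀ _ hcd]; ring
  rw [hMz, _root_.zpow_neg]
  generalize hw : (M 1 0 : ℂ) * z + M 1 1 = w at hcd ⊢
  generalize hl : ((v 0 : ℂ) * M 0 0 + v 1 * M 1 0) * z + (v 0 * M 0 1 + v 1 * M 1 1) = l at hL ⊢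
  field_simp
  subst hw hl
  linear_combination (-(v 0 : ℂ)) * hdet

lemma slash_two_linearLogDeriv_sub {M : Matrix (Fin 2) (Fin 2) ℝ} (hM : M.det = 1)
    {v w : Fin 2 → ℝ} (hv : v ≠ 0) (hw : w ≠ 0) {z : ℂ} (hz : z.im ≠ 0) :
    slash 1 M (linearLogDeriv v - linearLogDeriv w) z =
      linearLogDeriv (v ᵥ* M) z - linearLogDeriv (w ᵥ* M) z := by
  rw [slash_sub, Pi.sub_apply, slash_two_linearLogDeriv hM hv hz,
    slash_two_linearLogDeriv hM hw hz, sub_sub_sub_cancel_right]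

lemma sum_range_sub_add_two_eq_zero {α : Type*} [AddCommGroup α] {G : ℕ → α} {p : ℕ}
    (hG : Function.Periodic G p) : ∑ j ∈ Finset.range p, (G j - G (j + 2)) = 0 := by
  have hsplit : ∀ j, G j - G (j + 2) = (G j - G (j + 1)) + (G (j + 1) - G (j + 1 + 1)) :=
    fun j => by abel
  have h0 : G p = G 0 := by simpa using hG 0
  have h1 : G (p + 1) = G 1 := by simpa [add_comm] using hG 1
  simp only [hsplit, Finset.sum_add_distrib, Finset.sum_range_sub' G,
    Finset.sum_range_sub' (fun j => G (j + 1)), h0, h1, sub_self, add_zero]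

lemma sin_smul_pow_succ {R : Type*} [Ring R] [Algebra ℝ R] {M : R} {x : ℝ}
    (hM : M ^ 2 = (2 * cos x) • M - 1) (n : ℕ) :
    sin x • M ^ (n + 1) = sin ((n + 1) * x) • M - sin (n * x) • (1 : R) := by
  induction n with
  | zero => simp
  | succ n ih =>
    have htrig : sin ((n + 1 + 1) * x) = 2 * cos x * sin ((n + 1) * x) - sin (n * x) := by
      rw [show (n + 1 + 1) * x = (n + 1) * x + x by ring,
        show n * x = (n + 1) * x - x by ring, sin_add, sin_sub]
      ring
    rw [pow_succ, ← smul_mul_assoc, ih, sub_mul, smul_mul_assoc, smul_mul_assoc, one_mul,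
      ← sq, hM]
    push_cast
    rw [htrig]
    module

lemma heckeU_pow_eq_neg_one {p : ℕ} (hp : 2 ≤ p) :
    !![2 * cos (π / p), -1; 1, 0] ^ p = -1 := by
  set x := π / p
  have hp0 : (0 : ℝ) < p := by positivity
  have hsin : sin x ≠ 0 := by
    refine (sin_pos_of_pos_of_lt_pi (by positivity) ?_).ne'
    rw [div_lt_iff₀ hp0]
    have : (2 : ℝ) ≤ p := by exact_mod_cast hp
    nlinarith [pi_pos]
  have hsq : !![2 * cos x, -1; 1, 0] ^ 2 = (2 * cos x) • !![2 * cos x, -1; 1, 0] - 1 := by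
    ext i j
    fin_cases i <;> fin_cases j <;> simp [sq]
    ring
  obtain ⟨n, rfl⟩ : ∃ n, p = n + 1 := ⟨p - 1, by omega⟩
  have hpx : ((n : ℝ) + 1) * x = π := by simp only [x]; push_cast; field_simp
  have hnx : (n : ℝ) * x = π - x := by linarith
  have h := sin_smul_pow_succ hsq n
  rw [hpx, hnx, sin_pi, sin_pi_sub, zero_smul, zero_sub, ← smul_neg] at h
  exact smul_right_injective _ hsin h

noncomputable def twoPoleRPF (A : ℝ) : ℂ → ℂ :=
  linearLogDeriv ![1, -A] - linearLogDeriv ![A, 1]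

lemma twoPoleRPF_vectors_ne_zero (A : ℝ) :
    (![1, -A] : Fin 2 → ℝ) ≠ 0 ∧ (![A, 1] : Fin 2 → ℝ) ≠ 0 :=
  ⟨fun h => one_ne_zero (congrFun h 0), fun h => one_ne_zero (congrFun h 1)⟩

lemma twoPoleRPF_add_slash_T (A : ℝ) {z : ℂ} (hz : z.im ≠ 0) :
    twoPoleRPF A z + z ^ (-2 : ℤ) * twoPoleRPF A (-1 / z) = 0 := by
  obtain ⟨hv₁, hv₂⟩ := twoPoleRPF_vectors_ne_zero A
  have hT : z ^ (-2 : ℤ) * twoPoleRPF A (-1 / z) = slash 1 !![0, -1; 1, 0] (twoPoleRPF A) z := by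
    simp [slash]
  have h₁ : ![1, -A] ᵥ* !![0, -1; 1, 0] = (-1 : ℝ) • ![A, 1] := by
    ext i; fin_cases i <;> simp [vecMul, dotProduct]
  have h₂ : ![A, 1] ᵥ* !![0, -1; 1, 0] = ![1, -A] := by
    ext i; fin_cases i <;> simp [vecMul, dotProduct]
  rw [hT, twoPoleRPF, slash_two_linearLogDeriv_sub (by simp [det_fin_two_of]) hv₁ hv₂ hz, h₁, h₂,
    linearLogDeriv_smul (by norm_num)]
  simp

lemma vecMul_heckeU_sq {lam A : ℝ} (hA : A ^ 2 = lam ^ 2 - 1) :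
    ![1, -A] ᵥ* !![lam, -1; 1, 0] ^ 2 = (A - lam) • ![A, 1] := by
  ext i; fin_cases i
  · simp [sq, vecMul, dotProduct]; linear_combination -hA
  · simp [sq, vecMul, dotProduct]; ring

lemma sum_slash_heckeU_pow_twoPoleRPF {p : ℕ} (hp : 2 ≤ p) {A : ℝ}
    (hA : A ^ 2 = (2 * cos (π / p)) ^ 2 - 1) {z : ℂ} (hz : z.im ≠ 0) :
    ∑ j ∈ Finset.range p, slash 1 (!![2 * cos (π / p), -1; 1, 0] ^ j) (twoPoleRPF A) z = 0 := by
  set U := !![2 * cos (π / p), -1; 1, 0]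
  obtain ⟨hv₁, hv₂⟩ := twoPoleRPF_vectors_ne_zero A
  have hAlam : A - 2 * cos (π / p) ≠ 0 := fun h => by
    rw [show A = 2 * cos (π / p) by linarith] at hA; linarith
  set G := fun j : ℕ => linearLogDeriv (![1, -A] ᵥ* U ^ j) z
  have hG : Function.Periodic G p := fun j => by
    simp only [G, pow_add, heckeU_pow_eq_neg_one hp, U, mul_neg_one, vecMul_neg,
      ← neg_one_smul ℝ (_ ᵥ* _), linearLogDeriv_smul (by norm_num : (-1 : ℝ) ≠ 0)]
  have hshift : ∀ j, linearLogDeriv (![A, 1] ᵥ* U ^ j) z = G (j + 2) := fun j => by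
    simp only [G, add_comm j, pow_add, ← vecMul_vecMul, U, vecMul_heckeU_sq hA, smul_vecMul,
      linearLogDeriv_smul hAlam]
  rw [← sum_range_sub_add_two_eq_zero hG]
  refine Finset.sum_congr rfl fun j _ => ?_
  rw [twoPoleRPF, slash_two_linearLogDeriv_sub (by simp [U, det_pow, det_fin_two_of]) hv₁ hv₂ hz,
    hshift]

/-- Fix an integer `p ≥ 5` and set `λ = 2cos(π/p)`, so that
`λ² - 1 > 0`.  Define
`q(z) = 1/(z - √(λ²-1)) - √(λ²-1)/(√(λ²-1)·z + 1)`.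
Then `q` satisfies the rational period function relations of weight `2` on the
Hecke group `G_p`: for every `z ∈ ℂ` with `Im z ≠ 0`,
`q(z) + z^{-2}·q(-1/z) = 0` and `Σ_{j=0}^{p-1} (q ∣_2 U^j)(z) = 0`. -/
theorem stmt11 (p : ℕ) (hp : 5 ≤ p)
    (lam : ℝ) (hlam : lam = 2 * Real.cos (Real.pi / p))
    (hlam1 : lam ^ 2 - 1 > 0)
    (U : Matrix (Fin 2) (Fin 2) ℝ) (hU : U = !![lam, -1; 1, 0])
    (q : ℂ → ℂ)
    (hq : ∀ z : ℂ, q z =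
      1 / (z - (Real.sqrt (lam ^ 2 - 1) : ℂ)) -
      (Real.sqrt (lam ^ 2 - 1) : ℂ) / ((Real.sqrt (lam ^ 2 - 1) : ℂ) * z + 1)) :
    ∀ z : ℂ, z.im ≠ 0 →
      q z + z ^ (-2 : ℤ) * q (-1 / z) = 0 ∧
      ∑ j ∈ Finset.range p, slash 1 (U ^ j) q z = 0 := by
  intro z hz
  have hqA : q = twoPoleRPF √(lam ^ 2 - 1) := by
    funext w; simp [hq, twoPoleRPF, linearLogDeriv, sub_eq_add_neg]
  have hA : √(lam ^ 2 - 1) ^ 2 = lam ^ 2 - 1 := sq_sqrt hlam1.le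
  subst hqA hU hlam
  exact ⟨twoPoleRPF_add_slash_T _ hz, sum_slash_heckeU_pow_twoPoleRPF (by omega) hA hz⟩
end

section
/- Let p = 6 and λ = 2cos(π/6) = √3, so U = ((√3,-1),(1,0)). Define q(z) = -1/(z-1) + 1/(z-1)² - 1/(z+1) - 1/(z+1)² + 2/z. Then q satisfies the rational period function relations of weight 4 on the Hecke group G_6: for every z ∈ ℂ with Im z ≠ 0, q(z) + z^{-4}·q(-1/z) = 0 and Σ_{j=0}^{5} (q |_{4} U^j)(z) = 0. (Its nonzero poles {1, -1} form a Hecke-symmetric irreducible system of poles, and this gives an RPF of even weight-parameter k = 2 with those poles.) -/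
/-!
`U³ = !![√3, -2; 2, -√3]` is an involution exchanging the double poles `1` and `-1` of `q`, and
in `q + q|U³` they cancel: what remains, `r = q₆Swap √3 2`, has simple poles at `0`, `2/√3` and
`√3/2` only. Folding the sum over `j < 6` along `U³` reduces the `U`-relation to
`r + r|U + r|U² = 0`, where the principal parts cancel in pairs.
-/

open Finset

lemma mul_ofReal_sub_ofReal_ne_zero {z : ℂ} (hz : z.im ≠ 0) {l m : ℝ} (hlm : l ≠ 0 ∨ m ≠ 0) :
    z * l - m ≠ 0 := by
  intro h
  have hl : l = 0 := by simpa [hz] using congrArg Complex.im h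
  have hm : m = 0 := by simpa [hl] using h
  tauto

lemma sub_ofReal_ne_zero {z : ℂ} (hz : z.im ≠ 0) (m : ℝ) : z - m ≠ 0 := by
  simpa using mul_ofReal_sub_ofReal_ne_zero hz (l := 1) (m := m) (by simp)

lemma im_div_ofReal_mul_add (a b c d : ℝ) (z : ℂ) :
    (((a : ℂ) * z + b) / ((c : ℂ) * z + d)).im =
      (a * d - b * c) * z.im / Complex.normSq (c * z + d) := by
  rw [Complex.div_im]
  simp [Complex.normSq_apply]
  ring

section Slash

variable {k : ℕ} {M N : Matrix (Fin 2) (Fin 2) ℝ} {f g : ℂ → ℂ} {z : ℂ}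

lemma slash_fin_two_of (a b c d : ℝ) (f : ℂ → ℂ) (z : ℂ) :
    slash k !![a, b; c, d] f z =
      ((c : ℂ) * z + d) ^ (-(2 * (k : ℤ))) * f ((a * z + b) / (c * z + d)) :=
  rfl

lemma slash_one (f : ℂ → ℂ) (z : ℂ) : slash k 1 f z = f z := by
  simp [slash]

lemma slash_add : slash k M (f + g) z = slash k M f z + slash k M g z :=
  mul_add _ _ _

lemma denom_ne_zero (hM : M.det ≠ 0) (hz : z.im ≠ 0) : (M 1 0 : ℂ) * z + M 1 1 ≠ 0 := by
  rw [mul_comm]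
  simpa using mul_ofReal_sub_ofReal_ne_zero hz (l := M 1 0) (m := -M 1 1)
    (by contrapose! hM; simp [Matrix.det_fin_two, hM.1, neg_eq_zero.1 hM.2])

lemma im_moebius_ne_zero (hM : M.det ≠ 0) (hz : z.im ≠ 0) :
    (((M 0 0 : ℂ) * z + M 0 1) / ((M 1 0 : ℂ) * z + M 1 1)).im ≠ 0 := by
  rw [im_div_ofReal_mul_add, ← Matrix.det_fin_two]
  exact div_ne_zero (mul_ne_zero hM hz) (Complex.normSq_pos.2 (denom_ne_zero hM hz)).ne'

lemma slash_congr (hM : M.det ≠ 0) (hz : z.im ≠ 0) (hfg : ∀ w : ℂ, w.im ≠ 0 → f w = g w) :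
    slash k M f z = slash k M g z := by
  rw [slash, slash, hfg _ (im_moebius_ne_zero hM hz)]

lemma slash_mul (hN : (N 1 0 : ℂ) * z + N 1 1 ≠ 0) :
    slash k (M * N) f z = slash k N (slash k M f) z := by
  have hNz (a b : ℝ) : (a : ℂ) * ((N 0 0 * z + N 0 1) / (N 1 0 * z + N 1 1)) + b =
      ((a * N 0 0 + b * N 1 0 : ℝ) * z + (a * N 0 1 + b * N 1 1 : ℝ)) / (N 1 0 * z + N 1 1) := by
    rw [mul_div_assoc', div_add' _ _ _ hN]
    push_cast
    ring
  simp only [slash, hNz, div_div_div_cancel_right₀ hN, div_zpow, Matrix.mul_apply,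
    Fin.sum_univ_two]
  rw [div_mul_eq_mul_div, mul_div_assoc', mul_div_cancel_left₀ _ (zpow_ne_zero _ hN)]

lemma sum_range_add_slash_pow (V : Matrix (Fin 2) (Fin 2) ℝ) (hV : V.det ≠ 0) (hz : z.im ≠ 0)
    (m : ℕ) :
    ∑ j ∈ range (m + m), slash k (V ^ j) f z =
      ∑ j ∈ range m, slash k (V ^ j) (f + slash k (V ^ m) f) z := by
  rw [sum_range_add, ← sum_add_distrib]
  refine sum_congr rfl fun j _ => ?_
  rw [pow_add, slash_mul (denom_ne_zero (by simp [hV]) hz), slash_add]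

end Slash

noncomputable def q₆ (z : ℂ) : ℂ :=
  -1 / (z - 1) + 1 / (z - 1) ^ 2 - 1 / (z + 1) - 1 / (z + 1) ^ 2 + 2 / z

lemma q₆_add_zpow_mul_q₆_neg_inv {z : ℂ} (hz : z.im ≠ 0) :
    q₆ z + z ^ (-4 : ℤ) * q₆ (-1 / z) = 0 := by
  have h0 : z ≠ 0 := by simpa using sub_ofReal_ne_zero hz 0
  have h1 : z - 1 ≠ 0 := by simpa using sub_ofReal_ne_zero hz 1
  have h2 : z + 1 ≠ 0 := by simpa using sub_ofReal_ne_zero hz (-1)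
  have e1 : -1 / z - 1 = -(z + 1) / z := by field_simp; ring
  have e2 : -1 / z + 1 = (z - 1) / z := by field_simp; ring
  rw [q₆, q₆, e1, e2, zpow_neg]
  field_simp
  ring

noncomputable def q₆Swap (a c : ℝ) (z : ℂ) : ℂ :=
  2 / z + 2 * a ^ 3 / (a * z - c) - 2 * c ^ 3 / (c * z - a)

lemma q₆_add_slash_swap {a c : ℝ} (hac : c ^ 2 = a ^ 2 + 1) {z : ℂ} (hz : z.im ≠ 0) :
    q₆ z + slash 2 !![a, -c; c, -a] q₆ z = q₆Swap a c z := by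
  have hc : c ≠ 0 := by rintro rfl; nlinarith
  have hac' : ((c : ℂ) - a) * (c + a) = 1 := by
    exact_mod_cast (by linear_combination hac : (c - a) * (c + a) = 1)
  have hm : (a : ℂ) - c ≠ 0 := fun h => by
    rw [show (c : ℂ) - a = -(a - c) by ring, h] at hac'; simp at hac'
  have hp : (a : ℂ) + c ≠ 0 := fun h => by rw [add_comm, h] at hac'; simp at hac'
  have h0 : z ≠ 0 := by simpa using sub_ofReal_ne_zero hz 0
  have h1 : z - 1 ≠ 0 := by simpa using sub_ofReal_ne_zero hz 1
  have h2 : z + 1 ≠ 0 := by simpa using sub_ofReal_ne_zero hz (-1)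
  have hD : z * c - a ≠ 0 := mul_ofReal_sub_ofReal_ne_zero hz (.inl hc)
  have hA : z * a - c ≠ 0 := mul_ofReal_sub_ofReal_ne_zero hz (.inr hc)
  have e1 : (a * z - c) / (c * z - a) - 1 = (a - c) * (z + 1) / (c * z - a) := by
    rw [mul_comm (c : ℂ), div_sub_one hD]; ring
  have e2 : (a * z - c) / (c * z - a) + 1 = (a + c) * (z - 1) / (c * z - a) := by
    rw [mul_comm (c : ℂ), div_add_one hD]; ring
  rw [q₆, slash_fin_two_of, q₆, q₆Swap]
  push_cast
  simp only [← sub_eq_add_neg, zpow_neg]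
  rw [e1, e2]
  field_simp
  grind

section HeckeSix

variable {s : ℝ} (hs : s ^ 2 = 3) {z : ℂ} (hz : z.im ≠ 0)
include hs hz

lemma slash_q₆Swap_U :
    slash 2 !![s, -1; 1, 0] (q₆Swap s 2) z =
      -2 / z + 2 * s ^ 3 / (s * z - 1) - 2 * s ^ 3 / (s * z - 2) + 2 / (z - s) := by
  have hs' : (s : ℂ) ^ 2 = 3 := by exact_mod_cast hs
  have hs0 : s ≠ 0 := by rintro rfl; norm_num at hs
  have h0 : z ≠ 0 := by simpa using sub_ofReal_ne_zero hz 0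
  have h1 : z * s - 1 ≠ 0 := by simpa using mul_ofReal_sub_ofReal_ne_zero hz (m := 1) (.inl hs0)
  have h2 : z * s - 2 ≠ 0 := by simpa using mul_ofReal_sub_ofReal_ne_zero hz (m := 2) (.inl hs0)
  have h3 : z - s ≠ 0 := sub_ofReal_ne_zero hz s
  have e1 : s * ((s * z - 1) / z) - 2 = (z - s) / z := by
    field_simp; linear_combination z * hs'
  have e2 : 2 * ((s * z - 1) / z) - s = (s * z - 2) / z := by
    field_simp; ring
  rw [slash_fin_two_of, q₆Swap]
  push_cast
  simp only [← sub_eq_add_neg, zpow_neg, one_mul, add_zero]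
  rw [e1, e2]
  field_simp
  grind

lemma slash_q₆Swap_U_sq :
    slash 2 !![2, -s; s, -1] (q₆Swap s 2) z =
      16 / (2 * z - s) - 2 / (z - s) - 2 * s ^ 3 / (s * z - 1) := by
  have hs' : (s : ℂ) ^ 2 = 3 := by exact_mod_cast hs
  have hs0 : s ≠ 0 := by rintro rfl; norm_num at hs
  have h1 : z * s - 1 ≠ 0 := by simpa using mul_ofReal_sub_ofReal_ne_zero hz (m := 1) (.inl hs0)
  have h2 : z * 2 - s ≠ 0 := by
    simpa using mul_ofReal_sub_ofReal_ne_zero hz (l := 2) (m := s) (by simp)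
  have h3 : z - s ≠ 0 := sub_ofReal_ne_zero hz s
  have hD : (s : ℂ) * z - 1 ≠ 0 := by rwa [mul_comm]
  have e1 : s * ((2 * z - s) / (s * z - 1)) - 2 = -1 / (s * z - 1) := by
    rw [mul_div_assoc', div_sub' hD]; congr 1; linear_combination -hs'
  have e2 : 2 * ((2 * z - s) / (s * z - 1)) - s = (z - s) / (s * z - 1) := by
    rw [mul_div_assoc', div_sub' hD]; congr 1; linear_combination -z * hs'
  rw [slash_fin_two_of, q₆Swap]
  push_cast
  simp only [← sub_eq_add_neg, zpow_neg]
  rw [e1, e2]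
  field_simp
  grind

lemma q₆Swap_add_slash_U_add_slash_U_sq :
    q₆Swap s 2 z + slash 2 !![s, -1; 1, 0] (q₆Swap s 2) z +
      slash 2 !![2, -s; s, -1] (q₆Swap s 2) z = 0 := by
  rw [slash_q₆Swap_U hs hz, slash_q₆Swap_U_sq hs hz, q₆Swap]
  push_cast
  ring

end HeckeSix

/-- Let `p = 6` and `λ = 2cos(π/6) = √3`, so `U = ((√3,-1),(1,0))`.
Define `q(z) = -1/(z-1) + 1/(z-1)² - 1/(z+1) - 1/(z+1)² + 2/z`.  Then `q`
satisfies the rational period function relations of weight `4` on the Hecke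
group `G_6`: for every `z ∈ ℂ` with `Im z ≠ 0`, `q(z) + z^{-4}·q(-1/z) = 0` and
`Σ_{j=0}^{5} (q ∣_4 U^j)(z) = 0`. -/
theorem stmt16
    (lam : ℝ) (hlam : lam = 2 * Real.cos (Real.pi / 6))
    (U : Matrix (Fin 2) (Fin 2) ℝ) (hU : U = !![lam, -1; 1, 0])
    (q : ℂ → ℂ)
    (hq : ∀ z : ℂ, q z =
      -1 / (z - 1) + 1 / (z - 1) ^ 2 - 1 / (z + 1) - 1 / (z + 1) ^ 2 + 2 / z) :
    ∀ z : ℂ, z.im ≠ 0 →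
      q z + z ^ (-4 : ℤ) * q (-1 / z) = 0 ∧
      ∑ j ∈ Finset.range 6, slash 2 (U ^ j) q z = 0 := by
  have hs : lam ^ 2 = 3 := by
    rw [hlam, Real.cos_pi_div_six, mul_div_cancel₀ _ two_ne_zero, Real.sq_sqrt zero_le_three]
  obtain rfl : q = q₆ := funext hq
  have hdet : U.det ≠ 0 := by simp [hU, Matrix.det_fin_two]
  have hU2 : U ^ 2 = !![2, -lam; lam, -1] := by
    rw [hU, sq, Matrix.mul_fin_two]; congr 1; norm_num [← sq, hs]
  have hU3 : U ^ 3 = !![lam, -2; 2, -lam] := by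
    rw [pow_succ, hU2, hU, Matrix.mul_fin_two]; congr 1; norm_num [← sq, hs]; ring
  have hpair (w : ℂ) (hw : w.im ≠ 0) : (q₆ + slash 2 !![lam, -2; 2, -lam] q₆) w = q₆Swap lam 2 w :=
    q₆_add_slash_swap (by rw [hs]; norm_num) hw
  intro z hz
  refine ⟨q₆_add_zpow_mul_q₆_neg_inv hz, ?_⟩
  rw [show 6 = 3 + 3 from rfl, sum_range_add_slash_pow U hdet hz, hU3,
    sum_congr rfl fun j _ => slash_congr (by simp [hdet]) hz hpair]
  simp only [sum_range_succ, range_zero, sum_empty, pow_zero, pow_one, slash_one, hU2, zero_add]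
  rw [hU]
  exact q₆Swap_add_slash_U_add_slash_U_sq hs hz
end
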